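/- Let L ≥ 4 be an even integer and define, for real δ ∈ [0,1], f̂_L(δ) = 1 − h(δ) − (1/L)·log(Σ_{j=L/2}^{L} C(L,j)) + (1/L)·h(Lδ/4) + (δ/4)·log(L(L+2)/4), where C(a,b) is the binomial coefficient. Then f̂_L(0) > 0 and f̂_L(2/L) < 0; consequently there exists δ̂ ∈ (0, 2/L) such that f̂_L(δ̂) = 0 and f̂_L(δ) > 0 for all δ with 0 ≤ δ < δ̂. -/

import Mathlib

/-! Write `S = ∑_{j=L/2}^{L} C(L,j)`. The symmetry `C(L,j) = C(L,L-j)` makes the lower half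
of the binomial row no larger than the upper half, so `2^(L-1) ≤ S < 2^L`; the upper bound gives
`f̂_L(0) = 1 - (log S)/L > 0`. At `δ = 2/L` the term `h(Lδ/4) = h(1/2) = 1`, and the lower
bound on `S` reduces `L·f̂_L(2/L) < 0` to `2 + ½·log(L(L+2)/4) < L·h(2/L)`, which follows from
`1 - 1/y ≤ ln y ≤ y - 1` and `ln 2 < 3/4`. The root `δ̂` is the least zero of `f̂_L` in
`[0, 2/L]`, which exists by compactness and the intermediate value theorem. -/

open Finset Filter

/-- Weight (number of ones) of a binary word. -/
def wt {n : ℕ} (x : Fin n → Bool) : ℕ := (Finset.univ.filter fun i => x i = true).card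

/-- The index (in a word of length `m * L`) of position `j` of subblock `i`. -/
def subIdx (m L : ℕ) (i : Fin m) (j : Fin L) : Fin (m * L) :=
  ⟨i.val * L + j.val, by
    have hj : j.val < L := j.isLt
    have hi : i.val + 1 ≤ m := i.isLt
    calc i.val * L + j.val < i.val * L + L := Nat.add_lt_add_left hj _
      _ = (i.val + 1) * L := by ring
      _ ≤ m * L := Nat.mul_le_mul hi (Nat.le_refl L)⟩

/-- The `i`-th subblock (of length `L`) of a binary word of length `m * L`. -/
def subblock (m L : ℕ) (x : Fin (m * L) → Bool) (i : Fin m) : Fin L → Bool :=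
  fun j => x (subIdx m L i j)

/-- The CSCC space: binary words of length `m * L` each of whose `m` subblocks of
length `L` has weight exactly `w`. -/
def CSCCspace (m L w : ℕ) : Set (Fin (m * L) → Bool) :=
  {x | ∀ i : Fin m, wt (subblock m L x i) = w}

/-- The SECC space: binary words of length `m * L` each of whose `m` subblocks of
length `L` has weight at least `w`. -/
def SECCspace (m L w : ℕ) : Set (Fin (m * L) → Bool) :=
  {x | ∀ i : Fin m, w ≤ wt (subblock m L x i)}

/-- A code with minimum distance `d` inside the space `Sp`. -/
def isCode {n : ℕ} (Sp : Set (Fin n → Bool)) (d : ℕ) (C : Finset (Fin n → Bool)) : Prop :=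
  (↑C : Set (Fin n → Bool)) ⊆ Sp ∧ ∀ x ∈ C, ∀ y ∈ C, x ≠ y → d ≤ hammingDist x y

/-- The ball of radius `t` around `x`, taken inside the space `Sp`. -/
def ball {n : ℕ} (Sp : Set (Fin n → Bool)) (x : Fin n → Bool) (t : ℕ) :
    Set (Fin n → Bool) :=
  {y | y ∈ Sp ∧ hammingDist x y ≤ t}

/-- `C(m,L,d,w)`: the maximum size of an `(m,L,d,w)`-CSCC. -/
noncomputable def maxCSCC (m L d w : ℕ) : ℕ :=
  sSup {k | ∃ C : Finset (Fin (m * L) → Bool), isCode (CSCCspace m L w) d C ∧ C.card = k}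

/-- `S(m,L,d,w)`: the maximum size of an `(m,L,d,w)`-SECC. -/
noncomputable def maxSECC (m L d w : ℕ) : ℕ :=
  sSup {k | ∃ C : Finset (Fin (m * L) → Bool), isCode (SECCspace m L w) d C ∧ C.card = k}

/-- `A(n,d,w)`: the maximum size of a constant weight code. -/
noncomputable def maxCWC (n d w : ℕ) : ℕ :=
  sSup {k | ∃ C : Finset (Fin n → Bool), isCode {x | wt x = w} d C ∧ C.card = k}

/-- `H(n,d,w)`: the maximum size of a heavy weight code. -/
noncomputable def maxHWC (n d w : ℕ) : ℕ :=
  sSup {k | ∃ C : Finset (Fin n → Bool), isCode {x | w ≤ wt x} d C ∧ C.card = k}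

/-- `A(n,d)`: the maximum size of a binary code of length `n` and distance `d`. -/
noncomputable def maxBinary (n d : ℕ) : ℕ :=
  sSup {k | ∃ C : Finset (Fin n → Bool),
    (∀ x ∈ C, ∀ y ∈ C, x ≠ y → d ≤ hammingDist x y) ∧ C.card = k}

/-- `A_q(n,d)`: the maximum size of a `q`-ary code of length `n` and distance `d`. -/
noncomputable def maxQary (q n d : ℕ) : ℕ :=
  sSup {k | ∃ C : Finset (Fin n → Fin q),
    (∀ x ∈ C, ∀ y ∈ C, x ≠ y → d ≤ hammingDist x y) ∧ C.card = k}

/-- The size of a radius-`r` CSCC ball: the sum over all tuples `(u_1, …, u_m)` with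
`0 ≤ u_i ≤ min{w, L-w}` and `2(u_1 + ⋯ + u_m) ≤ r` of `∏ i, C(w,u_i)·C(L-w,u_i)`. -/
def csccBallSize (m L w r : ℕ) : ℕ :=
  ∑ u ∈ (Finset.univ : Finset (Fin m → Fin (min w (L - w) + 1))).filter
      (fun u => 2 * (∑ i, (u i : ℕ)) ≤ r),
    ∏ i, (w.choose (u i : ℕ)) * ((L - w).choose (u i : ℕ))

/-- The binary entropy function (base-2 logarithms, `h 0 = h 1 = 0`). -/
noncomputable def binent (p : ℝ) : ℝ :=
  -(p * Real.logb 2 p) - (1 - p) * Real.logb 2 (1 - p)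

/-- The asymptotic CSCC rate `γ(L,δ,w/L)`. -/
noncomputable def gammaRate (L : ℕ) (δ : ℝ) (w : ℕ) : ℝ :=
  Filter.limsup (fun m : ℕ =>
    Real.logb 2 (maxCSCC m L ⌊(m : ℝ) * L * δ⌋₊ w) / ((m : ℝ) * L)) Filter.atTop

/-- The asymptotic SECC rate `σ(L,δ,w/L)`. -/
noncomputable def sigmaRate (L : ℕ) (δ : ℝ) (w : ℕ) : ℝ :=
  Filter.limsup (fun m : ℕ =>
    Real.logb 2 (maxSECC m L ⌊(m : ℝ) * L * δ⌋₊ w) / ((m : ℝ) * L)) Filter.atTop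
/-- The function `f̂_L(δ) = 1 − h(δ) − (1/L)·log(Σ_{j=L/2}^{L} C(L,j))
    + (1/L)·h(Lδ/4) + (δ/4)·log(L(L+2)/4)`. -/
noncomputable def fHat (L : ℕ) (δ : ℝ) : ℝ :=
  1 - binent δ
    - (1 / (L : ℝ)) * Real.logb 2 ((∑ j ∈ Finset.Icc (L / 2) L, L.choose j : ℕ))
    + (1 / (L : ℝ)) * binent ((L : ℝ) * δ / 4)
    + (δ / 4) * Real.logb 2 ((L : ℝ) * ((L : ℝ) + 2) / 4)

open Real

lemma binent_eq_binEntropy_div_log_two (p : ℝ) : binent p = binEntropy p / log 2 := by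
  simp only [binent, binEntropy, logb, log_inv]; ring

@[fun_prop]
lemma continuous_binent : Continuous binent := by
  simpa only [← funext binent_eq_binEntropy_div_log_two] using
    binEntropy_continuous.div_const (log 2)

lemma binent_zero : binent 0 = 0 := by
  simp [binent_eq_binEntropy_div_log_two]

lemma binent_two_inv : binent 2⁻¹ = 1 := by
  rw [binent_eq_binEntropy_div_log_two, binEntropy_two_inv, div_self (log_pos one_lt_two).ne']

lemma continuous_fHat (L : ℕ) : Continuous (fHat L) := by
  unfold fHat; fun_prop

lemma mul_binEntropy_two_div {x : ℝ} (hx : x ≠ 0) :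
    x * binEntropy (2 / x) = 2 * log (x / 2) + (x - 2) * log (x / (x - 2)) := by
  have h : 1 - 2 / x = (x - 2) / x := by field_simp
  rw [binEntropy, h, inv_div, inv_div]
  field_simp

lemma sum_choose_eq_Ico_half_add_Icc_half (n : ℕ) :
    2 ^ n = ∑ j ∈ Ico 0 (n / 2), n.choose j + ∑ j ∈ Icc (n / 2) n, n.choose j := by
  rw [← Nat.sum_range_choose n, range_eq_Ico, ← Ico_add_one_right_eq_Icc,
    sum_Ico_consecutive _ (Nat.zero_le _) (by omega)]

lemma sum_choose_Ico_half_le_sum_choose_Icc_half (n : ℕ) :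
    ∑ j ∈ Ico 0 (n / 2), n.choose j ≤ ∑ j ∈ Icc (n / 2) n, n.choose j := by
  calc ∑ j ∈ Ico 0 (n / 2), n.choose j = ∑ j ∈ Ico 0 (n / 2), n.choose (n - j) :=
        sum_congr rfl fun j hj => (Nat.choose_symm (by simp only [mem_Ico] at hj; omega)).symm
    _ = ∑ j ∈ Ico (n + 1 - n / 2) (n + 1 - 0), n.choose j := sum_Ico_reflect _ _ (by omega)
    _ ≤ ∑ j ∈ Icc (n / 2) n, n.choose j :=
        sum_le_sum_of_subset fun j hj => by simp only [mem_Ico, mem_Icc] at hj ⊢; omega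

lemma one_le_sum_choose_Icc_half (n : ℕ) : 1 ≤ ∑ j ∈ Icc (n / 2) n, n.choose j :=
  (Nat.choose_self n).ge.trans <|
    single_le_sum (f := n.choose) (fun _ _ => Nat.zero_le _)
      (by simp only [mem_Icc]; omega)

lemma logb_sum_choose_Icc_half_lt {n : ℕ} (hn : 2 ≤ n) :
    logb 2 ((∑ j ∈ Icc (n / 2) n, n.choose j : ℕ) : ℝ) < n := by
  have hlow : 1 ≤ ∑ j ∈ Ico 0 (n / 2), n.choose j :=
    (Nat.choose_zero_right n).ge.trans <|
      single_le_sum (f := n.choose) (fun _ _ => Nat.zero_le _)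
        (by simp only [mem_Ico]; omega)
  have hlt : ∑ j ∈ Icc (n / 2) n, n.choose j < 2 ^ n := by
    have := sum_choose_eq_Ico_half_add_Icc_half n; omega
  rw [logb_lt_iff_lt_rpow one_lt_two (by exact_mod_cast one_le_sum_choose_Icc_half n),
    rpow_natCast]
  exact_mod_cast hlt

lemma sub_one_le_logb_sum_choose_Icc_half (n : ℕ) :
    (n : ℝ) - 1 ≤ logb 2 ((∑ j ∈ Icc (n / 2) n, n.choose j : ℕ) : ℝ) := by
  have hle : 2 ^ n ≤ 2 * ∑ j ∈ Icc (n / 2) n, n.choose j := by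
    have := sum_choose_eq_Ico_half_add_Icc_half n
    have := sum_choose_Ico_half_le_sum_choose_Icc_half n
    omega
  rw [le_logb_iff_rpow_le one_lt_two (by exact_mod_cast one_le_sum_choose_Icc_half n),
    rpow_sub two_pos, rpow_natCast, rpow_one, div_le_iff₀ two_pos, mul_comm]
  exact_mod_cast hle

lemma fHat_zero_pos {L : ℕ} (hL : 2 ≤ L) : 0 < fHat L 0 := by
  have hLpos : (0 : ℝ) < L := by exact_mod_cast (by omega : 0 < L)
  have hlt := (div_lt_one hLpos).mpr (logb_sum_choose_Icc_half_lt hL)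
  simp only [fHat, mul_zero, zero_div, zero_mul]
  rw [binent_zero, one_div_mul_eq_div]
  linarith

lemma two_mul_log_two_add_half_log_lt {x : ℝ} (hx : 4 ≤ x) :
    2 * log 2 + log (x * (x + 2) / 4) / 2 < 2 * log (x / 2) + (x - 2) * log (x / (x - 2)) := by
  have hx0 : 0 < x := by linarith
  have hlog_half : log 2 ≤ log (x / 2) := log_le_log two_pos (by linarith)
  have hsplit : log (x * (x + 2) / 4) = 2 * log (x / 2) + log ((x + 2) / x) := by
    rw [two_mul, ← log_mul (by positivity) (by positivity),
      ← log_mul (by positivity) (by positivity)]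
    congr 1; field_simp; ring
  have hstep : log ((x + 2) / x) ≤ 1 / 2 := by
    have h := log_le_sub_one_of_pos (show 0 < (x + 2) / x by positivity)
    have : (x + 2) / x - 1 ≤ 1 / 2 := by
      rw [div_sub_one hx0.ne', div_le_iff₀ hx0]; linarith
    linarith
  have hgap : 1 ≤ (x - 2) * log (x / (x - 2)) := by
    have h := one_sub_inv_le_log_of_pos (show 0 < x / (x - 2) by
      apply div_pos <;> linarith)
    have : (x - 2) * (1 - (x / (x - 2))⁻¹) = 2 - 4 / x := by
      field_simp; ring
    have : 4 / x ≤ 1 := by rw [div_le_one hx0]; exact hx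
    nlinarith
  linarith [log_two_lt_d9]

lemma two_add_half_logb_lt_mul_binent {x : ℝ} (hx : 4 ≤ x) :
    2 + logb 2 (x * (x + 2) / 4) / 2 < x * binent (2 / x) := by
  have hlog2 : 0 < log 2 := log_pos one_lt_two
  rw [binent_eq_binEntropy_div_log_two, mul_div_assoc', mul_binEntropy_two_div (by linarith),
    lt_div_iff₀ hlog2, logb]
  have h := two_mul_log_two_add_half_log_lt hx
  have : (2 + log (x * (x + 2) / 4) / log 2 / 2) * log 2 =
      2 * log 2 + log (x * (x + 2) / 4) / 2 := by
    field_simp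
  linarith

lemma fHat_two_div_neg {L : ℕ} (hL : 4 ≤ L) : fHat L (2 / L) < 0 := by
  have hx : (4 : ℝ) ≤ L := by exact_mod_cast hL
  have hx0 : (0 : ℝ) < L := by linarith
  have hexpand : (L : ℝ) * fHat L (2 / L) = L + 1
      - logb 2 ((∑ j ∈ Icc (L / 2) L, L.choose j : ℕ) : ℝ) - L * binent (2 / L)
      + logb 2 ((L : ℝ) * ((L : ℝ) + 2) / 4) / 2 := by
    have : (L : ℝ) * (2 / L) / 4 = 2⁻¹ := by field_simp; norm_num
    rw [fHat, this, binent_two_inv]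
    field_simp
    ring
  have hS := sub_one_le_logb_sum_choose_Icc_half L
  have hkey := two_add_half_logb_lt_mul_binent hx
  exact neg_of_mul_neg_right (by linarith) hx0.le

lemma exists_mem_Ioo_eq_forall_Ico_lt {α δ : Type*} [ConditionallyCompleteLinearOrder α]
    [TopologicalSpace α] [OrderTopology α] [DenselyOrdered α] [LinearOrder δ]
    [TopologicalSpace δ] [OrderClosedTopology δ] {f : α → δ} {a b : α} {y : δ} (hab : a ≤ b)
    (hf : ContinuousOn f (Set.Icc a b)) (ha : y < f a) (hb : f b < y) :
    ∃ c ∈ Set.Ioo a b, f c = y ∧ ∀ t ∈ Set.Ico a c, y < f t := by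
  have hK : IsCompact (Set.Icc a b ∩ f ⁻¹' Set.Iic y) :=
    isCompact_Icc.of_isClosed_subset (hf.preimage_isClosed_of_isClosed isClosed_Icc isClosed_Iic)
      Set.inter_subset_left
  obtain ⟨c, ⟨⟨hac, hcb⟩, hfc⟩, hmin⟩ := hK.exists_isLeast ⟨b, ⟨Set.right_mem_Icc.2 hab, hb.le⟩⟩
  have hbefore : ∀ t ∈ Set.Ico a c, y < f t := fun t ⟨hat, htc⟩ =>
    lt_of_not_ge fun hft => htc.not_ge (hmin ⟨⟨hat, htc.le.trans hcb⟩, hft⟩)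
  obtain ⟨t, ⟨hat, htc⟩, hft⟩ :=
    intermediate_value_Icc' hac (hf.mono (Set.Icc_subset_Icc_right hcb)) ⟨hfc, ha.le⟩
  obtain rfl : t = c := le_antisymm htc (hmin ⟨⟨hat, htc.trans hcb⟩, hft.le⟩)
  refine ⟨t, ⟨hac.lt_of_ne ?_, hcb.lt_of_ne ?_⟩, hft, hbefore⟩
  · rintro rfl; exact ha.ne' hft
  · rintro rfl; exact hb.ne hft

theorem stmt_18_general (L : ℕ) (hL : 4 ≤ L) :
    0 < fHat L 0 ∧ fHat L (2 / (L : ℝ)) < 0 ∧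
    ∃ δh : ℝ, δh ∈ Set.Ioo 0 (2 / (L : ℝ)) ∧ fHat L δh = 0 ∧
      ∀ δ : ℝ, 0 ≤ δ → δ < δh → 0 < fHat L δ := by
  have hzero := fHat_zero_pos (by omega : 2 ≤ L)
  have htwo := fHat_two_div_neg hL
  obtain ⟨δh, hmem, hroot, hpos⟩ := exists_mem_Ioo_eq_forall_Ico_lt (by positivity)
    (continuous_fHat L).continuousOn hzero htwo
  exact ⟨hzero, htwo, δh, hmem, hroot, fun δ h0 hlt => hpos δ ⟨h0, hlt⟩⟩

/-- For even `L ≥ 4`: `f̂_L(0) > 0`, `f̂_L(2/L) < 0`, and hence `f̂_L` has a root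
`δ̂ ∈ (0, 2/L)` with `f̂_L > 0` on `[0, δ̂)`. -/
theorem stmt_18 (L : ℕ) (hL : 4 ≤ L) (hLe : Even L) :
    0 < fHat L 0 ∧ fHat L (2 / (L : ℝ)) < 0 ∧
    ∃ δh : ℝ, δh ∈ Set.Ioo 0 (2 / (L : ℝ)) ∧ fHat L δh = 0 ∧
      ∀ δ : ℝ, 0 ≤ δ → δ < δh → 0 < fHat L δ :=
  stmt_18_general L hL
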